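/- For every vertex u of the 4×4 rook's graph R and every vertex v of the Shrikhande graph S, the 1-egonets R[N_1(u)] and S[N_1(v)] are not isomorphic; moreover, both R and S are vertex-transitive (for any two vertices of the same graph there is an automorphism carrying one to the other), so within each of R and S all 1-egonets are pairwise isomorphic. -/

import Mathlib

open SimpleGraph

/-- The 4×4 rook's graph: the box product K_4 □ K_4 of two complete graphs on 4
vertices. Two distinct pairs are adjacent iff they agree in exactly one coordinate. -/
def rook : SimpleGraph (Fin 4 × Fin 4) :=
  (⊤ : SimpleGraph (Fin 4)) □ (⊤ : SimpleGraph (Fin 4))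

instance : DecidableRel rook.Adj := fun x y =>
  decidable_of_iff ((x.1 ≠ y.1 ∧ x.2 = y.2) ∨ (x.2 ≠ y.2 ∧ x.1 = y.1))
    (by simp [rook, SimpleGraph.boxProd_adj])

/-- The connection set of the Shrikhande graph:
C = {±(1,0), ±(0,1), ±(1,1)} ⊆ ℤ/4ℤ × ℤ/4ℤ. -/
def shrikhandeC : Finset (ZMod 4 × ZMod 4) :=
  {(1, 0), (-1, 0), (0, 1), (0, -1), (1, 1), (-1, -1)}

/-- The Shrikhande graph: the Cayley graph on ℤ/4ℤ × ℤ/4ℤ with connection set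
C = {±(1,0), ±(0,1), ±(1,1)}; two vertices are adjacent iff their difference is in C. -/
def shrikhande : SimpleGraph (ZMod 4 × ZMod 4) where
  Adj x y := x - y ∈ shrikhandeC
  symm := ⟨by
    show ∀ x y : ZMod 4 × ZMod 4, x - y ∈ shrikhandeC → y - x ∈ shrikhandeC
    decide⟩
  loopless := ⟨by
    show ∀ x : ZMod 4 × ZMod 4, x - x ∈ shrikhandeC → False
    decide⟩

instance : DecidableRel shrikhande.Adj := fun x y =>
  inferInstanceAs (Decidable (x - y ∈ shrikhandeC))

/-- The `k`-egonet of `v` in `G`: the subgraph of `G` induced on the set `N_k(v)` of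
vertices at graph distance at most `k` from `v`. -/
def egonet {V : Type*} (G : SimpleGraph V) (k : ℕ) (v : V) :
    SimpleGraph {u : V | G.Reachable v u ∧ G.dist v u ≤ k} :=
  G.induce {u : V | G.Reachable v u ∧ G.dist v u ≤ k}

lemma mem_egonet1 {V : Type*} (G : SimpleGraph V) (v u : V) :
    (G.Reachable v u ∧ G.dist v u ≤ 1) ↔ (u = v ∨ G.Adj v u) := by
  constructor
  · rintro ⟨hr, hd⟩
    interval_cases h : G.dist v u
    · left
      exact (((SimpleGraph.dist_eq_zero_iff_eq_or_not_reachable).mp h).resolve_right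
        (fun hn => hn hr)).symm
    · right; exact SimpleGraph.dist_eq_one_iff_adj.mp h
  · rintro (rfl | h)
    · exact ⟨Reachable.refl _, by rw [SimpleGraph.dist_self]; exact Nat.zero_le 1⟩
    · exact ⟨h.reachable, le_of_eq (SimpleGraph.dist_eq_one_iff_adj.mpr h)⟩

/-- Transport of 1-egonets along a graph isomorphism. -/
def egonetIso1 {V W : Type*} {G : SimpleGraph V} {H : SimpleGraph W}
    (φ : G ≃g H) (v : V) (w : W) (hw : φ v = w) :
    egonet G 1 v ≃g egonet H 1 w where
  toEquiv := φ.toEquiv.subtypeEquiv (fun u => by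
    change (G.Reachable v u ∧ G.dist v u ≤ 1) ↔ (H.Reachable w (φ u) ∧ H.dist w (φ u) ≤ 1)
    rw [mem_egonet1, mem_egonet1, ← hw]
    constructor
    · rintro (rfl | h)
      · left; rfl
      · right; exact φ.map_adj_iff.mpr h
    · rintro (h | h)
      · left; exact φ.toEquiv.injective h
      · right; exact φ.map_adj_iff.mp h)
  map_rel_iff' := by
    rintro ⟨a, ha⟩ ⟨b, hb⟩
    exact φ.map_adj_iff

/-- Automorphism of the rook graph from a pair of permutations of `Fin 4`. -/
def rookAut (σ τ : Equiv.Perm (Fin 4)) : rook ≃g rook where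
  toEquiv := Equiv.prodCongr σ τ
  map_rel_iff' := by
    rintro ⟨a₁, a₂⟩ ⟨b₁, b₂⟩
    simp [rook, SimpleGraph.boxProd_adj, SimpleGraph.top_adj,
      σ.injective.ne_iff, τ.injective.ne_iff, σ.injective.eq_iff, τ.injective.eq_iff]

lemma rook_transitive (u u' : Fin 4 × Fin 4) : ∃ φ : rook ≃g rook, φ u = u' := by
  refine ⟨rookAut (Equiv.swap u.1 u'.1) (Equiv.swap u.2 u'.2), ?_⟩
  show (Equiv.swap u.1 u'.1 u.1, Equiv.swap u.2 u'.2 u.2) = u'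
  rw [Equiv.swap_apply_left, Equiv.swap_apply_left]

/-- Translation automorphism of the Shrikhande graph. -/
def shrikhandeAut (t : ZMod 4 × ZMod 4) : shrikhande ≃g shrikhande where
  toEquiv := Equiv.addLeft t
  map_rel_iff' := by
    intro a b
    show (t + a) - (t + b) ∈ shrikhandeC ↔ a - b ∈ shrikhandeC
    rw [add_sub_add_left_eq_sub]

lemma shrikhande_transitive (v v' : ZMod 4 × ZMod 4) :
    ∃ φ : shrikhande ≃g shrikhande, φ v = v' := by
  refine ⟨shrikhandeAut (v' - v), ?_⟩
  show v' - v + v = v'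
  ring

set_option synthInstance.maxSize 1000 in
set_option synthInstance.maxHeartbeats 1000000 in
set_option maxHeartbeats 2000000 in
lemma shrikhande_no_K4 : ∀ a b c d : ZMod 4 × ZMod 4,
    (a = 0 ∨ shrikhande.Adj 0 a) → (b = 0 ∨ shrikhande.Adj 0 b) →
    (c = 0 ∨ shrikhande.Adj 0 c) → (d = 0 ∨ shrikhande.Adj 0 d) →
    shrikhande.Adj a b → shrikhande.Adj a c → shrikhande.Adj a d →
    shrikhande.Adj b c → shrikhande.Adj b d → shrikhande.Adj c d → False := by
  decide

/-- For every vertex u of the 4×4 rook's graph R and every vertex v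
of the Shrikhande graph S, the 1-egonets R[N_1(u)] and S[N_1(v)] are not
isomorphic; moreover, both R and S are vertex-transitive, so within each of R and S
all 1-egonets are pairwise isomorphic. -/
theorem rook_shrikhande_one_egonets_not_iso_and_vertexTransitive :
    (∀ (u : Fin 4 × Fin 4) (v : ZMod 4 × ZMod 4),
        ¬ Nonempty (egonet rook 1 u ≃g egonet shrikhande 1 v)) ∧
    (∀ u u' : Fin 4 × Fin 4, ∃ φ : rook ≃g rook, φ u = u') ∧
    (∀ v v' : ZMod 4 × ZMod 4, ∃ φ : shrikhande ≃g shrikhande, φ v = v') ∧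
    (∀ u u' : Fin 4 × Fin 4, Nonempty (egonet rook 1 u ≃g egonet rook 1 u')) ∧
    (∀ v v' : ZMod 4 × ZMod 4,
        Nonempty (egonet shrikhande 1 v ≃g egonet shrikhande 1 v')) := by
  refine ⟨?_, rook_transitive, shrikhande_transitive, ?_, ?_⟩
  · rintro u v ⟨ψ⟩
    obtain ⟨φr, hφr⟩ := rook_transitive (0, 0) u
    obtain ⟨φs, hφs⟩ := shrikhande_transitive v (0, 0)
    let θ : egonet rook 1 ((0, 0) : Fin 4 × Fin 4) ≃g
        egonet shrikhande 1 ((0, 0) : ZMod 4 × ZMod 4) :=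
      (egonetIso1 φr (0,0) u hφr).trans (ψ.trans (egonetIso1 φs v (0,0) hφs))
    -- the four rook vertices (0,0),(0,1),(0,2),(0,3) form a K4 in the egonet of (0,0)
    have hmem : ∀ j : Fin 4, ((0, j) : Fin 4 × Fin 4) ∈
        {w : Fin 4 × Fin 4 | rook.Reachable (0,0) w ∧ rook.dist (0,0) w ≤ 1} := by
      intro j
      rw [Set.mem_setOf_eq, mem_egonet1]
      by_cases h : j = 0
      · left; simp [h]
      · right
        exact SimpleGraph.boxProd_adj.mpr (Or.inr ⟨fun he => h he.symm, rfl⟩)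
    have hadj : ∀ i j : Fin 4, i ≠ j →
        (egonet rook 1 ((0,0) : Fin 4 × Fin 4)).Adj ⟨(0, i), hmem i⟩ ⟨(0, j), hmem j⟩ := by
      intro i j hij
      show rook.Adj (0, i) (0, j)
      exact SimpleGraph.boxProd_adj.mpr (Or.inr ⟨hij, rfl⟩)
    have hmem' : ∀ j : Fin 4, ((θ ⟨(0, j), hmem j⟩ : ZMod 4 × ZMod 4) = 0 ∨
        shrikhande.Adj 0 (θ ⟨(0, j), hmem j⟩ : ZMod 4 × ZMod 4)) := by
      intro j
      have := (θ ⟨(0, j), hmem j⟩).2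
      rw [Set.mem_setOf_eq, mem_egonet1] at this
      simp at this; exact this
    have hadj' : ∀ i j : Fin 4, i ≠ j →
        shrikhande.Adj (θ ⟨(0, i), hmem i⟩ : ZMod 4 × ZMod 4)
          (θ ⟨(0, j), hmem j⟩ : ZMod 4 × ZMod 4) := by
      intro i j hij
      exact θ.map_adj_iff.mpr (hadj i j hij)
    exact shrikhande_no_K4 _ _ _ _ (hmem' 0) (hmem' 1) (hmem' 2) (hmem' 3)
      (hadj' 0 1 (by decide)) (hadj' 0 2 (by decide)) (hadj' 0 3 (by decide))
      (hadj' 1 2 (by decide)) (hadj' 1 3 (by decide)) (hadj' 2 3 (by decide))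
  · intro u u'
    obtain ⟨φ, hφ⟩ := rook_transitive u u'
    exact ⟨egonetIso1 φ u u' hφ⟩
  · intro v v'
    obtain ⟨φ, hφ⟩ := shrikhande_transitive v v'
    exact ⟨egonetIso1 φ v v' hφ⟩
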